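/- Let λ be a weight of gl(p+q|r+s) of the form λ = (−λ₁^δ,…,−λ_q^δ | −λ₁^ε,…,−λ_s^ε | 0…0 | 0…0, λ_s^ε,…,λ₁^ε | λ_q^δ,…,λ₁^δ) in the ordered basis given by the δε-chain δ_{p+1}…δ_{p+q} ε_{r+1}…ε_{r+s} δ_{q+1}…δ_p ε_{s+1}…ε_{s+r} ε_s…ε_1 δ_q…δ_1. Then the bubble-sort chain of reflections R reversing this chain (with odd swaps acting by the odd-reflection rule) satisfies R(λ) = −λ. -/

import Mathlib

noncomputable section

/-- The basis weight `δ_i` (for `Sum.inl i`) resp. `ε_j` (for `Sum.inr j`), 0-based. -/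
def wtN (a : ℕ ⊕ ℕ) : (ℕ ⊕ ℕ) → ℝ := Pi.single a 1

/-- The invariant form with `⟨δ_i,δ_j⟩ = δ_{ij}` (`i,j < m`), `⟨ε_i,ε_j⟩ = −δ_{ij}`
(`i,j < n`), `⟨δ_i,ε_j⟩ = 0`. -/
def wformN (m n : ℕ) (v w : (ℕ ⊕ ℕ) → ℝ) : ℝ :=
  (∑ i ∈ Finset.range m, v (Sum.inl i) * w (Sum.inl i)) -
    ∑ j ∈ Finset.range n, v (Sum.inr j) * w (Sum.inr j)

/-- Even reflection at an anisotropic root. -/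
def evenReflN (m n : ℕ) (α μ : (ℕ ⊕ ℕ) → ℝ) : (ℕ ⊕ ℕ) → ℝ :=
  μ - (2 * wformN m n α μ / wformN m n α α) • α

/-- Odd reflection on weights: `r_α(λ) = λ` if `⟨λ,α⟩ = 0`, `λ − α` otherwise. -/
def oddReflN (m n : ℕ) (α μ : (ℕ ⊕ ℕ) → ℝ) : (ℕ ⊕ ℕ) → ℝ :=
  if wformN m n α μ = 0 then μ else μ - α

/-- The reflection attached to a swap of two symbols: even if of the same type,
odd otherwise. -/
def swapReflN (m n : ℕ) (a b : ℕ ⊕ ℕ) (μ : (ℕ ⊕ ℕ) → ℝ) : (ℕ ⊕ ℕ) → ℝ :=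
  if a.isLeft = b.isLeft then evenReflN m n (wtN a - wtN b) μ
  else oddReflN m n (wtN a - wtN b) μ

/-- The bubble-sort pattern of adjacent transpositions reversing positions `l,…,r`. -/
def bubblePat (l r : ℕ) (b : Bool) : List (ℕ × ℕ) :=
  if _h : l < r then
    if b then ((List.range (r - l)).map fun k => (l, l + k + 1)) ++ bubblePat (l + 1) r false
    else ((List.range (r - l)).map fun k => (r - 1 - k, r)) ++ bubblePat l (r - 1) true
  else []
termination_by r - l
decreasing_by all_goals omega

/-- The chain of reflections reversing the δε-chain `C` of full length `m+n`. -/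
def RPchainN (m n : ℕ) (C : ℕ → ℕ ⊕ ℕ) (μ : (ℕ ⊕ ℕ) → ℝ) : (ℕ ⊕ ℕ) → ℝ :=
  (bubblePat 0 (m + n - 1) true).foldl (fun ν p => swapReflN m n (C p.1) (C p.2) ν) μ

/-- The compatible δε-chain
`δ_{p+1}…δ_{p+q} ε_{r+1}…ε_{r+s} δ_{q+1}…δ_p ε_{s+1}…ε_r ε_s…ε_1 δ_q…δ_1`
of `gl(p+q|r+s)`, written 0-based. -/
def glChain (p q r s : ℕ) (k : ℕ) : ℕ ⊕ ℕ :=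
  if k < q then Sum.inl (p + k)
  else if k < q + s then Sum.inr (r + k - q)
  else if k < p + s then Sum.inl (k - s)
  else if k < p + r then Sum.inr (k - p)
  else if k < p + r + s then Sum.inr (p + r + s - 1 - k)
  else Sum.inl (p + q + r + s - 1 - k)

/-- The weight `λ = Σ_i λ_i^δ (δ_i − δ_{p+i}) + Σ_j λ_j^ε (ε_j − ε_{r+j})`, i.e. the
weight with coordinate vector
`(−λ^δ…|−λ^ε…|0…0|0…0, λ^ε reversed | λ^δ reversed)` along the above chain. -/
def lamVecN (p q r s : ℕ) (ld le : ℕ → ℝ) : (ℕ ⊕ ℕ) → ℝ :=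
  (∑ i ∈ Finset.range q, ld i • (wtN (Sum.inl i) - wtN (Sum.inl (p + i)))) +
    ∑ j ∈ Finset.range s, le j • (wtN (Sum.inr j) - wtN (Sum.inr (r + j)))

/-!
At each stage of the bubble sort only the outer pass matters: the pass over the window `[l, r]`
sweeps `C l` past the interior, swaps it with `C r` and sweeps `C r` back. Each odd reflection
of the outward sweep is undone by its mirror image on the way back, so the pass acts as the
transposition of `C l` and `C r`, which have the same parity. Once the window has shrunk to the
middle blocks, where `λ` vanishes, every reflection acts trivially. Hence `R` reverses the
coordinate vector of `λ` along the chain, and that vector is antisymmetric under reversal.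
-/

def IsBasisIndex (m n : ℕ) : ℕ ⊕ ℕ → Prop := Sum.elim (· < m) (· < n)

section Form
variable {m n : ℕ}

lemma wformN_sub_left (v w μ : (ℕ ⊕ ℕ) → ℝ) :
    wformN m n (v - w) μ = wformN m n v μ - wformN m n w μ := by
  simp only [wformN, Pi.sub_apply, sub_mul, Finset.sum_sub_distrib]
  ring

lemma wformN_wtN_inl (i : ℕ) (μ : (ℕ ⊕ ℕ) → ℝ) :
    wformN m n (wtN (.inl i)) μ = if i < m then μ (.inl i) else 0 := by
  simp [wformN, wtN, Pi.single_apply]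

lemma wformN_wtN_inr (j : ℕ) (μ : (ℕ ⊕ ℕ) → ℝ) :
    wformN m n (wtN (.inr j)) μ = if j < n then -μ (.inr j) else 0 := by
  split_ifs <;> simp_all [wformN, wtN, Pi.single_apply]

lemma wformN_wtN_of_eq_zero {a : ℕ ⊕ ℕ} {μ : (ℕ ⊕ ℕ) → ℝ} (h : μ a = 0) :
    wformN m n (wtN a) μ = 0 := by
  cases a <;> simp [wformN_wtN_inl, wformN_wtN_inr, h]

lemma sub_smul_wtN_sub_eq_comp_swap (μ : (ℕ ⊕ ℕ) → ℝ) (a b : ℕ ⊕ ℕ) :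
    μ - (μ a - μ b) • (wtN a - wtN b) = μ ∘ Equiv.swap a b := by
  funext x
  rcases eq_or_ne x a with rfl | hxa
  · rcases eq_or_ne x b with rfl | hxb
    · simp
    · simp [wtN, hxb]
  · rcases eq_or_ne x b with rfl | hxb
    · simp [wtN, hxa]
    · simp [wtN, hxa, hxb, Equiv.swap_apply_of_ne_of_ne]

lemma wtN_comp_swap (a b c : ℕ ⊕ ℕ) : wtN c ∘ Equiv.swap a b = wtN (Equiv.swap a b c) := by
  funext x
  simp [wtN, Pi.single_apply, Equiv.swap_apply_eq_iff]

end Form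

section Reflections
variable {m n : ℕ}

lemma swapReflN_of_isLeft_eq {a b : ℕ ⊕ ℕ} (ha : IsBasisIndex m n a) (hb : IsBasisIndex m n b)
    (hab : a ≠ b) (h : a.isLeft = b.isLeft) (μ : (ℕ ⊕ ℕ) → ℝ) :
    swapReflN m n a b μ = μ ∘ Equiv.swap a b := by
  have hcoeff : 2 * wformN m n (wtN a - wtN b) μ /
      wformN m n (wtN a - wtN b) (wtN a - wtN b) = μ a - μ b := by
    rcases a with i | i <;> rcases b with j | j <;>
      simp only [Sum.isLeft_inl, Sum.isLeft_inr, reduceCtorEq] at h <;>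
      simp only [IsBasisIndex, Sum.elim_inl, Sum.elim_inr] at ha hb
    · have hij : i ≠ j := fun h => hab (h ▸ rfl)
      simp only [wformN_sub_left, wformN_wtN_inl, if_pos ha, if_pos hb]
      simp [wtN, hij, hij.symm, one_add_one_eq_two]
    · have hij : i ≠ j := fun h => hab (h ▸ rfl)
      simp only [wformN_sub_left, wformN_wtN_inr, if_pos ha, if_pos hb]
      simp only [wtN, Pi.sub_apply, Pi.single_eq_same, Pi.single_eq_of_ne, ne_eq, Sum.inr.injEq,
        hij, hij.symm, not_false_eq_true, sub_zero, zero_sub, sub_neg_eq_add, neg_neg]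
      ring
  rw [swapReflN, if_pos h, evenReflN, hcoeff, sub_smul_wtN_sub_eq_comp_swap]

lemma swapReflN_of_isLeft_ne {a b : ℕ ⊕ ℕ} (ha : IsBasisIndex m n a) (hb : IsBasisIndex m n b)
    (h : a.isLeft ≠ b.isLeft) (μ : (ℕ ⊕ ℕ) → ℝ) :
    swapReflN m n a b μ = if μ a + μ b = 0 then μ else μ - (wtN a - wtN b) := by
  have hform : wformN m n (wtN a - wtN b) μ = 0 ↔ μ a + μ b = 0 := by
    rcases a with i | i <;> rcases b with j | j <;>
      simp only [Sum.isLeft_inl, Sum.isLeft_inr, ne_eq, not_true_eq_false] at h <;>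
      simp only [IsBasisIndex, Sum.elim_inl, Sum.elim_inr] at ha hb
    · simp only [wformN_sub_left, wformN_wtN_inl, wformN_wtN_inr, if_pos ha, if_pos hb,
        sub_neg_eq_add]
    · simp only [wformN_sub_left, wformN_wtN_inl, wformN_wtN_inr, if_pos ha, if_pos hb]
      constructor <;> intro <;> linarith
  rw [swapReflN, if_neg h, oddReflN]
  exact if_congr hform rfl rfl

lemma swapReflN_of_eq_zero {a b : ℕ ⊕ ℕ} {μ : (ℕ ⊕ ℕ) → ℝ} (ha : μ a = 0) (hb : μ b = 0) :
    swapReflN m n a b μ = μ := by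
  have hform : wformN m n (wtN a - wtN b) μ = 0 := by
    rw [wformN_sub_left, wformN_wtN_of_eq_zero ha, wformN_wtN_of_eq_zero hb, sub_zero]
  unfold swapReflN evenReflN oddReflN
  split_ifs <;> simp [hform]

end Reflections

def reflectAlong (m n : ℕ) (L : List ((ℕ ⊕ ℕ) × (ℕ ⊕ ℕ))) (μ : (ℕ ⊕ ℕ) → ℝ) :
    (ℕ ⊕ ℕ) → ℝ :=
  L.foldl (fun ν ab => swapReflN m n ab.1 ab.2 ν) μ

section ReflectAlong
variable {m n : ℕ}

lemma reflectAlong_eq_self {L : List ((ℕ ⊕ ℕ) × (ℕ ⊕ ℕ))} {μ : (ℕ ⊕ ℕ) → ℝ}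
    (h : ∀ ab ∈ L, μ ab.1 = 0 ∧ μ ab.2 = 0) : reflectAlong m n L μ = μ := by
  induction L with
  | nil => rfl
  | cons ab L ih =>
    obtain ⟨ha, hb⟩ := h ab List.mem_cons_self
    rw [reflectAlong, List.foldl_cons, swapReflN_of_eq_zero ha hb]
    exact ih fun ab' h' => h ab' (List.mem_cons_of_mem ab h')

lemma reflectAlong_append (L L' : List ((ℕ ⊕ ℕ) × (ℕ ⊕ ℕ))) (μ : (ℕ ⊕ ℕ) → ℝ) :
    reflectAlong m n (L ++ L') μ = reflectAlong m n L' (reflectAlong m n L μ) :=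
  List.foldl_append

lemma reflectAlong_palindrome {a b : ℕ ⊕ ℕ} (ha : IsBasisIndex m n a)
    (hb : IsBasisIndex m n b) (hab : a ≠ b) (h : a.isLeft = b.isLeft) (ks : List (ℕ ⊕ ℕ))
    (hks : ∀ k ∈ ks, IsBasisIndex m n k ∧ k ≠ a ∧ k ≠ b) (μ : (ℕ ⊕ ℕ) → ℝ) :
    reflectAlong m n (ks.map (a, ·) ++ (a, b) :: ks.reverse.map (·, b)) μ =
      μ ∘ Equiv.swap a b := by
  induction ks generalizing μ with
  | nil => simp [reflectAlong, swapReflN_of_isLeft_eq ha hb hab h]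
  | cons k ks ih =>
    obtain ⟨hk, hka, hkb⟩ := hks k List.mem_cons_self
    have hsplit :
        reflectAlong m n ((k :: ks).map (a, ·) ++ (a, b) :: (k :: ks).reverse.map (·, b)) μ =
          swapReflN m n k b (reflectAlong m n (ks.map (a, ·) ++ (a, b) :: ks.reverse.map (·, b))
            (swapReflN m n a k μ)) := by
      simp [reflectAlong]
    rw [hsplit, ih (fun k' h' => hks k' (List.mem_cons_of_mem k h'))]
    by_cases hpar : a.isLeft = k.isLeft
    · rw [swapReflN_of_isLeft_eq ha hk hka.symm hpar,
        swapReflN_of_isLeft_eq hk hb hkb (hpar.symm.trans h)]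
      funext x
      simp only [Function.comp_apply, Equiv.swap_apply_def]
      split_ifs <;> simp_all
    · have hkb' : k.isLeft ≠ b.isLeft := fun h' => hpar (h.trans h'.symm)
      rw [swapReflN_of_isLeft_ne ha hk hpar, swapReflN_of_isLeft_ne hk hb hkb']
      by_cases hsum : μ a + μ k = 0
      · simp [hsum, Equiv.swap_apply_of_ne_of_ne hka hkb, add_comm (μ k)]
      · have hshift : (μ - (wtN a - wtN k)) ∘ Equiv.swap a b =
            μ ∘ Equiv.swap a b - (wtN b - wtN k) := by
          rw [Pi.sub_comp, Pi.sub_comp, wtN_comp_swap, wtN_comp_swap, Equiv.swap_apply_left,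
            Equiv.swap_apply_of_ne_of_ne hka hkb]
        have hsum' : (μ ∘ Equiv.swap a b - (wtN b - wtN k)) k +
            (μ ∘ Equiv.swap a b - (wtN b - wtN k)) b ≠ 0 := by
          simpa [wtN, Equiv.swap_apply_of_ne_of_ne hka hkb, hkb, hkb.symm, add_comm] using hsum
        rw [if_neg hsum, hshift, if_neg hsum']
        abel

end ReflectAlong

section BubblePat

lemma bubblePat_of_le {l r : ℕ} (h : r ≤ l) (b : Bool) : bubblePat l r b = [] := by
  rw [bubblePat, dif_neg (by omega)]

lemma bubblePat_bounds {l r : ℕ} {b : Bool} {pr : ℕ × ℕ} (h : pr ∈ bubblePat l r b) :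
    l ≤ pr.1 ∧ pr.1 < pr.2 ∧ pr.2 ≤ r := by
  induction l, r, b using bubblePat.induct with
  | case1 l r hlr ih =>
    rw [bubblePat, dif_pos hlr, if_pos rfl, List.mem_append, List.mem_map] at h
    rcases h with ⟨k, hk, rfl⟩ | h
    · rw [List.mem_range] at hk
      dsimp only
      omega
    · have := ih h; omega
  | case2 l r b hlr hb ih =>
    rw [bubblePat, dif_pos hlr, if_neg hb, List.mem_append, List.mem_map] at h
    rcases h with ⟨k, hk, rfl⟩ | h
    · rw [List.mem_range] at hk
      dsimp only
      omega
    · have := ih h; omega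
  | case3 l r b hlr => simp [bubblePat_of_le (not_lt.mp hlr)] at h

lemma bubblePat_true_eq {l r : ℕ} (h : l < r) :
    bubblePat l r true = (List.range' (l + 1) (r - l - 1)).map (l, ·) ++ (l, r) ::
      ((List.range' (l + 1) (r - l - 1)).reverse.map (·, r) ++ bubblePat (l + 1) (r - 1) true) := by
  obtain ⟨c, rfl⟩ : ∃ c, r = l + 1 + c := ⟨r - l - 1, by omega⟩
  have hc : l + 1 + c - l - 1 = c := by omega
  rw [bubblePat, dif_pos h, if_pos rfl, hc, show l + 1 + c - l = c + 1 by omega, List.range_succ,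
    List.map_append, List.reverse_range', List.range'_eq_map_range, List.map_map, List.map_map,
    show l + 1 + c - 1 = l + c by omega]
  rcases Nat.eq_zero_or_pos c with rfl | hpos
  · simp [bubblePat_of_le]
  · rw [bubblePat, dif_pos (by omega), if_neg Bool.false_ne_true,
      show l + 1 + c - (l + 1) = c by omega]
    simp only [List.map_cons, List.map_nil, List.append_assoc, List.cons_append, List.nil_append]
    congr 2
    · funext k
      simp only [Function.comp_apply, Prod.mk.injEq, true_and]
      omega
    · rw [Nat.add_right_comm]
    · rw [show l + 1 + c - 1 = l + c by omega]
      rfl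

end BubblePat

section Reversal
variable {m n : ℕ}

lemma reflectAlong_bubblePat_of_lt {C : ℕ → ℕ ⊕ ℕ} {l r : ℕ} (hlr : l < r)
    (hinj : Set.InjOn C (Set.Icc l r)) (hC : ∀ k ∈ Set.Icc l r, IsBasisIndex m n (C k))
    (hpar : (C l).isLeft = (C r).isLeft) (μ : (ℕ ⊕ ℕ) → ℝ) :
    reflectAlong m n ((bubblePat l r true).map (Prod.map C C)) μ =
      reflectAlong m n ((bubblePat (l + 1) (r - 1) true).map (Prod.map C C))
        (μ ∘ Equiv.swap (C l) (C r)) := by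
  set ks := List.range' (l + 1) (r - l - 1)
  have hsplit : (bubblePat l r true).map (Prod.map C C) =
      ((ks.map C).map (C l, ·) ++ (C l, C r) :: (ks.map C).reverse.map (·, C r)) ++
        (bubblePat (l + 1) (r - 1) true).map (Prod.map C C) := by
    rw [bubblePat_true_eq hlr]
    simp only [List.map_reverse, List.map_append, List.map_map, List.map_cons, Prod.map_apply,
      List.append_assoc, List.cons_append]
    rfl
  have hne : ∀ {i j}, i ∈ Set.Icc l r → j ∈ Set.Icc l r → i ≠ j → C i ≠ C j :=
    fun hi hj hij h => hij (hinj hi hj h)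
  have hl : l ∈ Set.Icc l r := ⟨le_rfl, hlr.le⟩
  have hr : r ∈ Set.Icc l r := ⟨hlr.le, le_rfl⟩
  rw [hsplit, reflectAlong_append, reflectAlong_palindrome (hC l hl) (hC r hr)
    (hne hl hr hlr.ne) hpar]
  simp only [List.mem_map, List.mem_range'_1, ks]
  rintro _ ⟨k, hk, rfl⟩
  have hk' : k ∈ Set.Icc l r := ⟨by omega, by omega⟩
  exact ⟨hC k hk', hne hk' hl (by omega), hne hk' hr (by omega)⟩

theorem reflectAlong_bubblePat_reverse {C : ℕ → ℕ ⊕ ℕ} (t : ℕ) {l r : ℕ}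
    (hinj : Set.InjOn C (Set.Icc l r)) (hC : ∀ k ∈ Set.Icc l r, IsBasisIndex m n (C k))
    (hpar : ∀ i < t, (C (l + i)).isLeft = (C (r - i)).isLeft) {μ : (ℕ ⊕ ℕ) → ℝ}
    (hzero : ∀ k, l + t ≤ k → k + t ≤ r → μ (C k) = 0) :
    (∀ k ∈ Set.Icc l r,
      reflectAlong m n ((bubblePat l r true).map (Prod.map C C)) μ (C k) = μ (C (l + r - k))) ∧
    ∀ x ∉ C '' Set.Icc l r,
      reflectAlong m n ((bubblePat l r true).map (Prod.map C C)) μ x = μ x := by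
  induction t generalizing l r μ with
  | zero =>
    have hself : reflectAlong m n ((bubblePat l r true).map (Prod.map C C)) μ = μ := by
      refine reflectAlong_eq_self fun ab hab => ?_
      obtain ⟨pr, hpr, rfl⟩ := List.mem_map.mp hab
      have hbounds := bubblePat_bounds hpr
      exact ⟨hzero _ (by omega) (by omega), hzero _ (by omega) (by omega)⟩
    refine ⟨fun k ⟨hlk, hkr⟩ => ?_, fun x _ => by rw [hself]⟩
    rw [hself, hzero k (by omega) (by omega), hzero _ (by omega) (by omega)]
  | succ t ih =>
    rcases lt_or_ge l r with hlr | hrl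
    · have hne : ∀ {i j}, i ∈ Set.Icc l r → j ∈ Set.Icc l r → i ≠ j → C i ≠ C j :=
        fun hi hj hij h => hij (hinj hi hj h)
      have hl : l ∈ Set.Icc l r := ⟨le_rfl, hlr.le⟩
      have hr : r ∈ Set.Icc l r := ⟨hlr.le, le_rfl⟩
      set μ' := μ ∘ Equiv.swap (C l) (C r)
      have hfix : ∀ k, l < k → k < r → μ' (C k) = μ (C k) := fun k hlk hkr =>
        congrArg μ (Equiv.swap_apply_of_ne_of_ne (hne ⟨hlk.le, hkr.le⟩ hl hlk.ne')
          (hne ⟨hlk.le, hkr.le⟩ hr hkr.ne))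
      have hinner : Set.Icc (l + 1) (r - 1) ⊆ Set.Icc l r :=
        Set.Icc_subset_Icc (by omega) (by omega)
      obtain ⟨hin, hout⟩ := ih (l := l + 1) (r := r - 1) (μ := μ') (hinj.mono hinner)
        (fun k hk => hC k (hinner hk))
        (fun i hi => by convert hpar (i + 1) (by omega) using 3 <;> omega)
        (fun k h1 h2 => by rw [hfix k (by omega) (by omega)]; exact hzero k (by omega) (by omega))
      have hend : ∀ j ∈ Set.Icc l r, j ∉ Set.Icc (l + 1) (r - 1) →
          C j ∉ C '' Set.Icc (l + 1) (r - 1) :=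
        fun j hj hj' ⟨i, hi, hij⟩ => hj' (hinj (hinner hi) hj hij ▸ hi)
      rw [reflectAlong_bubblePat_of_lt hlr hinj hC (by simpa using hpar 0 (by omega))]
      refine ⟨fun k ⟨hlk, hkr⟩ => ?_, fun x hx => ?_⟩
      · rcases hlk.eq_or_lt with rfl | hlk
        · rw [hout _ (hend _ hl (by simp)), Nat.add_sub_cancel_left]
          exact congrArg μ (Equiv.swap_apply_left _ _)
        rcases hkr.eq_or_lt with rfl | hkr
        · rw [hout _ (hend _ hr (by rw [Set.mem_Icc]; omega)), Nat.add_sub_cancel]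
          exact congrArg μ (Equiv.swap_apply_right _ _)
        rw [hin k ⟨by omega, by omega⟩, show l + 1 + (r - 1) - k = l + r - k by omega,
          hfix _ (by omega) (by omega)]
      · rw [hout x fun h => hx (Set.image_mono hinner h)]
        exact congrArg μ (Equiv.swap_apply_of_ne_of_ne (fun h => hx ⟨l, hl, h.symm⟩)
          (fun h => hx ⟨r, hr, h.symm⟩))
    · rw [bubblePat_of_le hrl, List.map_nil]
      refine ⟨fun k ⟨hlk, hkr⟩ => ?_, fun x _ => rfl⟩
      rw [show l + r - k = k by omega]
      rfl

end Reversal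

lemma RPchainN_eq_reflectAlong (m n : ℕ) (C : ℕ → ℕ ⊕ ℕ) (μ : (ℕ ⊕ ℕ) → ℝ) :
    RPchainN m n C μ = reflectAlong m n ((bubblePat 0 (m + n - 1) true).map (Prod.map C C)) μ := by
  rw [RPchainN, reflectAlong, List.foldl_map]; rfl

section GlChain
variable {p q r s : ℕ}

lemma lamVecN_inl (ld le : ℕ → ℝ) (i : ℕ) :
    lamVecN p q r s ld le (.inl i) =
      (if i < q then ld i else 0) - if p ≤ i ∧ i < p + q then ld (i - p) else 0 := by
  have hshift : ∀ x, i = p + x ↔ p ≤ i ∧ i - p = x := by omega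
  simp +contextual [lamVecN, Finset.sum_apply, wtN, Pi.single_apply, mul_sub,
    Finset.sum_sub_distrib, hshift, ite_and, Nat.sub_lt_iff_lt_add']

lemma lamVecN_inr (ld le : ℕ → ℝ) (j : ℕ) :
    lamVecN p q r s ld le (.inr j) =
      (if j < s then le j else 0) - if r ≤ j ∧ j < r + s then le (j - r) else 0 := by
  have hshift : ∀ x, j = r + x ↔ r ≤ j ∧ j - r = x := by omega
  simp +contextual [lamVecN, Finset.sum_apply, wtN, Pi.single_apply, mul_sub,
    Finset.sum_sub_distrib, hshift, ite_and, Nat.sub_lt_iff_lt_add']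

lemma glChain_of_lt (hpq : q ≤ p) (hrs : s ≤ r) {k : ℕ} (hk : k < q) :
    glChain p q r s k = .inl (p + k) ∧ glChain p q r s (p + q + r + s - 1 - k) = .inl k := by
  unfold glChain
  constructor <;> split_ifs <;> first | omega | rfl | (congr 1; omega)

lemma glChain_of_le_of_lt (hpq : q ≤ p) (hrs : s ≤ r) {k : ℕ} (hqk : q ≤ k) (hk : k < q + s) :
    glChain p q r s k = .inr (r + (k - q)) ∧
      glChain p q r s (p + q + r + s - 1 - k) = .inr (k - q) := by
  unfold glChain
  constructor <;> split_ifs <;> first | omega | rfl | (congr 1; omega)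

lemma lamVecN_glChain_of_le_of_lt (hpq : q ≤ p) (ld le : ℕ → ℝ) {k : ℕ} (hqk : q + s ≤ k)
    (hk : k < p + r) : lamVecN p q r s ld le (glChain p q r s k) = 0 := by
  unfold glChain
  split_ifs <;> simp only [lamVecN_inl, lamVecN_inr] <;> split_ifs <;> first | omega | simp

lemma glChain_isBasisIndex {k : ℕ} (hk : k < p + q + r + s) :
    IsBasisIndex (p + q) (r + s) (glChain p q r s k) := by
  unfold glChain
  split_ifs <;> simp only [IsBasisIndex, Sum.elim_inl, Sum.elim_inr] <;> omega

lemma glChain_injOn (hpq : q ≤ p) (hrs : s ≤ r) :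
    Set.InjOn (glChain p q r s) (Set.Iio (p + q + r + s)) := by
  intro k hk k' hk' h
  simp only [Set.mem_Iio] at hk hk'
  unfold glChain at h
  split_ifs at h <;> simp only [Sum.inl.injEq, Sum.inr.injEq] at h <;> omega

lemma glChain_isLeft_reverse (hpq : q ≤ p) (hrs : s ≤ r) {k : ℕ} (hk : k < q + s) :
    (glChain p q r s k).isLeft = (glChain p q r s (p + q + r + s - 1 - k)).isLeft := by
  rcases lt_or_ge k q with hkq | hqk
  · rw [(glChain_of_lt hpq hrs hkq).1, (glChain_of_lt hpq hrs hkq).2]; rfl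
  · rw [(glChain_of_le_of_lt hpq hrs hqk hk).1, (glChain_of_le_of_lt hpq hrs hqk hk).2]; rfl

lemma lamVecN_glChain_reverse_of_lt (hpq : q ≤ p) (hrs : s ≤ r) (ld le : ℕ → ℝ) {k : ℕ}
    (hk : k < q + s) :
    lamVecN p q r s ld le (glChain p q r s (p + q + r + s - 1 - k)) =
      -lamVecN p q r s ld le (glChain p q r s k) := by
  rcases lt_or_ge k q with hkq | hqk
  · rw [(glChain_of_lt hpq hrs hkq).1, (glChain_of_lt hpq hrs hkq).2, lamVecN_inl, lamVecN_inl]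
    simp [hkq, show ¬p ≤ k by omega, show ¬p + k < q by omega]
  · rw [(glChain_of_le_of_lt hpq hrs hqk hk).1, (glChain_of_le_of_lt hpq hrs hqk hk).2,
      lamVecN_inr, lamVecN_inr]
    simp [show k - q < s by omega, show ¬r ≤ k - q by omega, show ¬r + (k - q) < s by omega]

lemma lamVecN_glChain_reverse (hpq : q ≤ p) (hrs : s ≤ r) (ld le : ℕ → ℝ) {k : ℕ}
    (hk : k < p + q + r + s) :
    lamVecN p q r s ld le (glChain p q r s (p + q + r + s - 1 - k)) =
      -lamVecN p q r s ld le (glChain p q r s k) := by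
  rcases lt_or_ge k (q + s) with hks | hks
  · exact lamVecN_glChain_reverse_of_lt hpq hrs ld le hks
  rcases lt_or_ge k (p + r) with hkm | hkm
  · rw [lamVecN_glChain_of_le_of_lt hpq ld le hks hkm,
      lamVecN_glChain_of_le_of_lt hpq ld le (by omega) (by omega), neg_zero]
  · have h := lamVecN_glChain_reverse_of_lt hpq hrs ld le (k := p + q + r + s - 1 - k) (by omega)
    rw [show p + q + r + s - 1 - (p + q + r + s - 1 - k) = k by omega] at h
    rw [h, neg_neg]

lemma lamVecN_eq_zero_of_notMem (hpq : q ≤ p) (hrs : s ≤ r) (ld le : ℕ → ℝ) {x : ℕ ⊕ ℕ}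
    (hx : x ∉ glChain p q r s '' Set.Iio (p + q + r + s)) : lamVecN p q r s ld le x = 0 := by
  have hmem : ∀ k, k < p + q + r + s → glChain p q r s k ≠ x := fun k hk h => hx ⟨k, hk, h⟩
  rcases x with i | j
  · have h₁ : ¬i < q := fun hi => hmem _ (by omega) (glChain_of_lt hpq hrs hi).2
    have h₂ : ¬(p ≤ i ∧ i < p + q) := fun hi => hmem (i - p) (by omega)
      ((glChain_of_lt hpq hrs (k := i - p) (by omega)).1.trans (by congr 1; omega))
    simp [lamVecN_inl, h₁, h₂]
  · have h₁ : ¬j < s := fun hj => hmem _ (by omega)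
      ((glChain_of_le_of_lt hpq hrs (k := q + j) (by omega) (by omega)).2.trans (by simp))
    have h₂ : ¬(r ≤ j ∧ j < r + s) := fun hj => hmem (q + (j - r)) (by omega)
      ((glChain_of_le_of_lt hpq hrs (k := q + (j - r)) (by omega) (by omega)).1.trans
        (by congr 1; omega))
    simp [lamVecN_inr, h₁, h₂]

end GlChain

/-- the bubble-sort chain of (even and odd) reflections reversing the
compatible δε-chain of `gl(p+q|r+s)` sends every weight of the displayed form to its
negative: `R(λ) = −λ`. -/
theorem stmt12 (p q r s : ℕ) (hpq : q ≤ p) (hrs : s ≤ r) (ld le : ℕ → ℝ) :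
    RPchainN (p + q) (r + s) (glChain p q r s) (lamVecN p q r s ld le) =
      -lamVecN p q r s ld le := by
  rw [RPchainN_eq_reflectAlong]
  rcases Nat.eq_zero_or_pos (p + q + r + s) with hN | hN
  · have hzero : lamVecN p q r s ld le = 0 := by
      simp [lamVecN, show q = 0 by omega, show s = 0 by omega]
    rw [hzero, neg_zero]
    exact reflectAlong_eq_self (by simp)
  have hIcc : Set.Icc 0 (p + q + (r + s) - 1) = Set.Iio (p + q + r + s) := by
    ext k; simp only [Set.mem_Icc, Set.mem_Iio]; omega
  obtain ⟨hchain, hoff⟩ := reflectAlong_bubblePat_reverse (q + s) (C := glChain p q r s)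
    (hIcc ▸ glChain_injOn hpq hrs)
    (fun k hk => glChain_isBasisIndex (Set.mem_Iio.mp (hIcc ▸ hk)))
    (fun i hi => by simpa [← Nat.add_assoc] using glChain_isLeft_reverse hpq hrs hi)
    (fun k h₁ h₂ => lamVecN_glChain_of_le_of_lt hpq ld le (by omega) (by omega))
  funext x
  by_cases hx : x ∈ glChain p q r s '' Set.Iio (p + q + r + s)
  · obtain ⟨k, hk, rfl⟩ := hx
    rw [hchain k (hIcc ▸ hk), Pi.neg_apply, ← lamVecN_glChain_reverse hpq hrs ld le hk]
    congr 2
    omega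
  · rw [hoff x (hIcc ▸ hx), Pi.neg_apply, lamVecN_eq_zero_of_notMem hpq hrs ld le hx, neg_zero]
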